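/- Let R be a Noetherian domain, I ⊆ R a nonzero ideal, and M a finite torsion-free R-module of positive generic rank. Then colim_n Hom_R(I^n, M) is a finite R-module if and only if colim_n Hom_R(I^n, R) is a finite R-module. -/

import Mathlib

/-!
Both `Hom_R(Iⁿ, -)` and filtered colimits preserve injections, and they commute with finite
products, so an injection `M ↪ Nᵏ` induces an injection of local hulls; over a Noetherian ring
the local hull of `M` is then finite as soon as that of `N` is. A nonzero `m : M` gives
`R ↪ M`, `r ↦ r • m`, since `M` is torsion-free. Conversely `M` embeds in `K ⊗[R] M ≅ Kʳ`,
`K = Frac R`, and clearing the denominators of finitely many generators embeds `M` in `Rʳ`.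
-/

universe u

open TensorProduct

/-- The local hull `colim_n Hom_R(Iⁿ, M)`, the colimit taken along the maps induced by the
inclusions `Iⁿ⁺¹ ⊆ Iⁿ` (realized as a direct limit over `ℕ`). -/
noncomputable abbrev localHull (R : Type u) [CommRing R] (I : Ideal R)
    (M : Type u) [AddCommGroup M] [Module R M] : Type u :=
  Module.DirectLimit (ι := ℕ) (fun n => (I ^ n : Ideal R) →ₗ[R] M)
    (fun _ _ h => LinearMap.lcomp R M (Submodule.inclusion (Ideal.pow_le_pow_right h)))

theorem Module.exists_injective_fin_pi_of_noZeroSMulDivisors (R M : Type*) [CommRing R]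
    [IsDomain R] [IsNoetherianRing R] [AddCommGroup M] [Module R M] [Module.Finite R M]
    [NoZeroSMulDivisors R M] :
    ∃ (n : ℕ) (f : M →ₗ[R] (Fin n → R)), Function.Injective f := by
  let K := FractionRing R
  have hmk : Function.Injective (TensorProduct.mk R K M 1) := by
    rw [IsLocalizedModule.injective_iff_isRegular (nonZeroDivisors R)]
    exact fun c => smul_right_injective M (nonZeroDivisors.coe_ne_zero c)
  let e := (Module.finBasis K (K ⊗[R] M)).equivFun.restrictScalars R
  let g : M →ₗ[R] (Fin _ → K) := e.toLinearMap ∘ₗ TensorProduct.mk R K M 1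
  have hg : Function.Injective g := e.injective.comp hmk
  have := Module.finitePresentation_of_finite R M
  obtain ⟨h, s, hs⟩ := Module.FinitePresentation.exists_lift_of_isLocalizedModule
    (nonZeroDivisors R) (LinearMap.pi fun i => Algebra.linearMap R K ∘ₗ LinearMap.proj i) g
  refine ⟨_, h, (injective_iff_map_eq_zero h).mpr fun x hx => ?_⟩
  have hsx : g ((s : R) • x) = 0 := by
    rw [map_smul, ← Submonoid.smul_def, ← LinearMap.smul_apply, ← hs, LinearMap.comp_apply, hx,
      map_zero]
  exact (smul_eq_zero.mp (hg.eq_iff' (map_zero g) |>.mp hsx)).resolve_left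
    (nonZeroDivisors.coe_ne_zero s)

theorem Module.nontrivial_of_finrank_baseChange_pos {R K M : Type*} [CommRing R] [Field K]
    [Algebra R K] [AddCommGroup M] [Module R M] (hrank : 0 < Module.finrank K (K ⊗[R] M)) :
    Nontrivial M := by
  by_contra h
  have := not_nontrivial_iff_subsingleton.mp h
  exact hrank.ne' Module.finrank_zero_of_subsingleton

namespace localHull

variable {R : Type u} [CommRing R] (I : Ideal R)
variable {M N : Type u} [AddCommGroup M] [Module R M] [AddCommGroup N] [Module R N]

instance : DirectedSystem (fun n => (I ^ n : Ideal R) →ₗ[R] M)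
    (fun _ _ h => LinearMap.lcomp R M (Submodule.inclusion (Ideal.pow_le_pow_right h))) where
  map_self _ _ := rfl
  map_map _ _ _ _ _ _ := rfl

variable (M) in
noncomputable abbrev of (n : ℕ) : ((I ^ n : Ideal R) →ₗ[R] M) →ₗ[R] localHull R I M :=
  Module.DirectLimit.of R ℕ (fun n => (I ^ n : Ideal R) →ₗ[R] M)
    (fun _ _ h => LinearMap.lcomp R M (Submodule.inclusion (Ideal.pow_le_pow_right h))) n

noncomputable def map (g : M →ₗ[R] N) : localHull R I M →ₗ[R] localHull R I N :=
  Module.DirectLimit.map (fun n => LinearMap.llcomp R (I ^ n : Ideal R) M N g) fun _ _ _ => rfl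

theorem map_of (g : M →ₗ[R] N) (n : ℕ) (f : (I ^ n : Ideal R) →ₗ[R] M) :
    map I g (of I M n f) = of I N n (g ∘ₗ f) :=
  Module.DirectLimit.map_apply_of _ _ _

theorem map_pi_injective {κ : Type*} [Finite κ] (g : κ → M →ₗ[R] N)
    (hg : Function.Injective (LinearMap.pi g)) :
    Function.Injective (LinearMap.pi fun k => map I (g k)) := by
  refine (injective_iff_map_eq_zero _).mpr fun x hx => ?_
  obtain ⟨n, f, rfl⟩ := Module.DirectLimit.exists_of x
  have hgf : ∀ k, of I N n (g k ∘ₗ f) = 0 := fun k => by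
    rw [← map_of]; exact congrFun hx k
  choose m hnm hm using fun k => Module.DirectLimit.of.zero_exact (hgf k)
  obtain ⟨m₀, hm₀⟩ := Finite.exists_le m
  have hn : n ≤ max n m₀ := le_max_left n m₀
  have hf' : f ∘ₗ Submodule.inclusion (Ideal.pow_le_pow_right hn) = 0 := by
    refine LinearMap.ext fun a => hg <| funext fun k => ?_
    exact (LinearMap.congr_fun (hm k)
      ⟨a, Ideal.pow_le_pow_right ((hm₀ k).trans (le_max_right n m₀)) a.2⟩).trans
        (map_zero (g k)).symm
  rw [← Module.DirectLimit.of_f (hij := hn)]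
  exact (congrArg _ hf').trans (map_zero _)

variable [IsNoetherianRing R] [Module.Finite R (localHull R I N)]

theorem finite_of_injective_pi {κ : Type*} [Finite κ] (g : M →ₗ[R] κ → N)
    (hg : Function.Injective g) : Module.Finite R (localHull R I M) :=
  .of_injective _ (map_pi_injective I (fun k => LinearMap.proj k ∘ₗ g) hg)

theorem finite_of_injective (g : M →ₗ[R] N) (hg : Function.Injective g) :
    Module.Finite R (localHull R I M) :=
  finite_of_injective_pi I (κ := Unit) (LinearMap.pi fun _ => g) fun _ _ h => hg (congrFun h ())

end localHull

theorem local_hull_of_module_finite_iff_local_hull_of_ring_finite_general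
    (R : Type u) [CommRing R] [IsDomain R] [IsNoetherianRing R]
    (I : Ideal R)
    (M : Type u) [AddCommGroup M] [Module R M] [Module.Finite R M]
    [NoZeroSMulDivisors R M]
    (hrank : 0 < Module.finrank (FractionRing R) (FractionRing R ⊗[R] M)) :
    Module.Finite R (localHull R I M) ↔ Module.Finite R (localHull R I R) := by
  constructor
  · intro _
    have := Module.nontrivial_of_finrank_baseChange_pos hrank
    obtain ⟨m, hm⟩ := exists_ne (0 : M)
    exact localHull.finite_of_injective I (LinearMap.toSpanSingleton R M m)
      (smul_left_injective R hm)
  · intro _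
    obtain ⟨n, f, hf⟩ := Module.exists_injective_fin_pi_of_noZeroSMulDivisors R M
    exact localHull.finite_of_injective_pi I f hf

/-- Let `R` be a Noetherian domain, `I ⊆ R` a nonzero ideal, and `M` a finite torsion-free
`R`-module of positive generic rank.  Then `colim_n Hom_R(Iⁿ, M)` is a finite `R`-module if
and only if `colim_n Hom_R(Iⁿ, R)` is a finite `R`-module. -/
theorem local_hull_of_module_finite_iff_local_hull_of_ring_finite
    (R : Type u) [CommRing R] [IsDomain R] [IsNoetherianRing R]
    (I : Ideal R) (hI : I ≠ ⊥)
    (M : Type u) [AddCommGroup M] [Module R M] [Module.Finite R M]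
    [NoZeroSMulDivisors R M]
    (hrank : 0 < Module.finrank (FractionRing R) (FractionRing R ⊗[R] M)) :
    Module.Finite R (localHull R I M) ↔ Module.Finite R (localHull R I R) :=
  local_hull_of_module_finite_iff_local_hull_of_ring_finite_general R I M hrank
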